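/- Let σ = co{x₀, …, xₙ} ⊂ ℝⁿ be an n-simplex, let φ : U → ℝ and ζ : U → ℝᵐ be twice continuously differentiable on an open set U containing σ, and define M(x) = [[φ(x), ζ(x)ᵀ], [ζ(x), −I_m]]. Let β ≥ max over q,r ∈ {1,…,n} and ξ ∈ σ of |∂²φ/∂x⁽q⁾∂x⁽r⁾(ξ)|, let μ_k ≥ max over q,r ∈ {1,…,n} and ξ ∈ σ of |∂²ζ⁽ᵏ⁾/∂x⁽q⁾∂x⁽r⁾(ξ)| for each k ∈ {1,…,m}, and set c_j = n · max_{υ ∈ {0,…,n}} ‖x_j − x_υ‖₂² and E(x_j) = [[(1/2)(β c_j + Σ_{k=1}^{m} μ_k² c_j²), 0], [0, (1/2) I_m]]. If M(x_j) + E(x_j) ⪯ 0 holds at every vertex x_j, j = 0, …, n, then M(x) ⪯ 0 for every x ∈ σ. -/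

import Mathlib

open Matrix

/-- Euclidean norm on `ℝⁿ` (represented as `Fin n → ℝ`). -/
noncomputable def enorm2 {n : ℕ} (x : Fin n → ℝ) : ℝ := Real.sqrt (∑ i, x i ^ 2)

/-- Second partial derivative `∂²f/∂x⁽q⁾∂x⁽r⁾` of `f : ℝⁿ → ℝ` at `ξ`. -/
noncomputable def pd2 {n : ℕ} (f : (Fin n → ℝ) → ℝ) (q r : Fin n) (ξ : Fin n → ℝ) : ℝ :=
  fderiv ℝ (fun y => fderiv ℝ f y (Pi.single q 1)) ξ (Pi.single r 1)

/-- A real matrix is negative semidefinite iff its negation is positive semidefinite. -/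
def Matrix.NegSemidef {ι : Type*} [Fintype ι] (M : Matrix ι ι ℝ) : Prop :=
  (-M).PosSemidef

/-- The LMI `M(x) = [[φ(x), ζ(x)ᵀ], [ζ(x), −I_m]]`. -/
def Mlmi {n m : ℕ} (φ : (Fin n → ℝ) → ℝ) (ζ : (Fin n → ℝ) → (Fin m → ℝ))
    (x : Fin n → ℝ) : Matrix (Fin 1 ⊕ Fin m) (Fin 1 ⊕ Fin m) ℝ :=
  Matrix.fromBlocks
    (Matrix.of fun _ _ => φ x) (Matrix.of fun _ k => ζ x k)
    (Matrix.of fun k _ => ζ x k) (-1)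

/-- The error-bound matrix `E = [[½(β c + Σ_k μ_k² c²), 0], [0, ½ I_m]]`. -/
noncomputable def Elmi {m : ℕ} (β : ℝ) (μ : Fin m → ℝ) (c : ℝ) :
    Matrix (Fin 1 ⊕ Fin m) (Fin 1 ⊕ Fin m) ℝ :=
  Matrix.fromBlocks
    (Matrix.of fun _ _ => (1 / 2) * (β * c + ∑ k, μ k ^ 2 * c ^ 2)) 0
    0 ((1 / 2 : ℝ) • 1)

/-!
Write `y ∈ σ` as a convex combination `∑ⱼ wⱼ xⱼ`. For `d > 0` the arrowhead matrix
`[[a, uᵀ], [u, d I]]` is positive semidefinite iff `‖u‖² ≤ d a` (Schur complement), so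
`M(y) ⪯ 0` iff `φ(y) + ‖ζ(y)‖² ≤ 0`, and the vertex condition says
`φ(xⱼ) + E₁₁(xⱼ) + 2 ‖ζ(xⱼ)‖² ≤ 0`.

A second-order Taylor expansion at `y`, with the Hessian bounded entrywise, gives
`|g(xⱼ) - g(y) - Dg(y)(xⱼ - y)| ≤ K n ‖xⱼ - y‖² / 2 ≤ K cⱼ / 2`, since `‖xⱼ - y‖` is at most
the largest edge at `xⱼ`. Averaging with the weights `wⱼ` cancels the linear terms, so
`φ(y) ≤ ∑ⱼ wⱼ (φ(xⱼ) + β cⱼ / 2)` and, using `(a + b)² ≤ 2a² + 2b²` and Jensen,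
`ζₖ(y)² ≤ ∑ⱼ wⱼ (2 ζₖ(xⱼ)² + μₖ² cⱼ² / 2)`. Summing up, `φ(y) + ‖ζ(y)‖²` is bounded by the
`w`-average of the vertex quantities, which are all nonpositive.
-/

section Arrowhead

variable {ι : Type*} [DecidableEq ι]

def arrowheadMatrix (a : ℝ) (u : ι → ℝ) (d : ℝ) : Matrix (Fin 1 ⊕ ι) (Fin 1 ⊕ ι) ℝ :=
  fromBlocks (of fun _ _ => a) (of fun _ k => u k) (of fun k _ => u k) (d • 1)

variable [Fintype ι]

theorem dotProduct_arrowheadMatrix_mulVec (a : ℝ) (u : ι → ℝ) (d : ℝ) (s : Fin 1 → ℝ)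
    (v : ι → ℝ) :
    Sum.elim s v ⬝ᵥ (arrowheadMatrix a u d *ᵥ Sum.elim s v) =
      a * s 0 ^ 2 + 2 * s 0 * (u ⬝ᵥ v) + d * (v ⬝ᵥ v) := by
  rw [arrowheadMatrix, fromBlocks_mulVec, Sum.elim_comp_inl, Sum.elim_comp_inr,
    sumElim_dotProduct_sumElim]
  simp only [dotProduct_add, smul_mulVec, one_mulVec, dotProduct_smul, smul_eq_mul]
  simp only [dotProduct, mulVec, of_apply, Fin.sum_univ_one, Finset.mul_sum]
  rw [add_assoc, add_assoc (a * s 0 ^ 2)]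
  simp only [← Finset.sum_add_distrib]
  congr 1
  · ring
  · exact Finset.sum_congr rfl fun k _ => by ring

theorem arrowheadMatrix_posSemidef_iff {a d : ℝ} (u : ι → ℝ) (hd : 0 < d) :
    (arrowheadMatrix a u d).PosSemidef ↔ u ⬝ᵥ u ≤ d * a := by
  constructor
  · intro h
    have := h.dotProduct_mulVec_nonneg (Sum.elim (fun _ => d) (-u))
    rw [star_trivial, dotProduct_arrowheadMatrix_mulVec] at this
    simp only [dotProduct_neg, neg_dotProduct, neg_neg] at this
    nlinarith
  · intro h
    refine .of_dotProduct_mulVec_nonneg ?_ fun w => ?_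
    · refine IsHermitian.fromBlocks ?_ rfl ?_ <;> ext <;> simp [Matrix.one_apply, eq_comm]
    rw [star_trivial, ← Sum.elim_comp_inl_inr w]
    set s := w ∘ Sum.inl
    set v := w ∘ Sum.inr
    -- completing the square in the `ι`-block
    have hsquare : d * (Sum.elim s v ⬝ᵥ (arrowheadMatrix a u d *ᵥ Sum.elim s v)) =
        (d * a - u ⬝ᵥ u) * s 0 ^ 2 + (s 0 • u + d • v) ⬝ᵥ (s 0 • u + d • v) := by
      rw [dotProduct_arrowheadMatrix_mulVec]
      simp only [add_dotProduct, dotProduct_add, smul_dotProduct, dotProduct_smul, smul_eq_mul,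
        dotProduct_comm v u]
      ring
    have hsq := dotProduct_star_self_nonneg (s 0 • u + d • v)
    rw [star_trivial] at hsq
    refine nonneg_of_mul_nonneg_right ?_ hd
    rw [hsquare]
    exact add_nonneg (mul_nonneg (sub_nonneg.2 h) (sq_nonneg _)) hsq

end Arrowhead

section LMI

variable {n m : ℕ} (φ : (Fin n → ℝ) → ℝ) (ζ : (Fin n → ℝ) → (Fin m → ℝ)) (y : Fin n → ℝ)

theorem neg_Mlmi : -Mlmi φ ζ y = arrowheadMatrix (-φ y) (-ζ y) 1 := by
  simp only [Mlmi, arrowheadMatrix, fromBlocks_neg, one_smul]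
  congr 1
  ext
  simp

theorem neg_Mlmi_add_Elmi (β : ℝ) (μ : Fin m → ℝ) (c : ℝ) :
    -(Mlmi φ ζ y + Elmi β μ c) =
      arrowheadMatrix (-(φ y + 1 / 2 * (β * c + ∑ k, μ k ^ 2 * c ^ 2))) (-ζ y) (1 / 2) := by
  simp only [Mlmi, Elmi, arrowheadMatrix, fromBlocks_add, fromBlocks_neg]
  congr 1
  · ext; simp
  · ext; simp
  · ext; simp; ring

theorem Mlmi_negSemidef_iff : (Mlmi φ ζ y).NegSemidef ↔ φ y + ∑ k, ζ y k ^ 2 ≤ 0 := by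
  rw [NegSemidef, neg_Mlmi, arrowheadMatrix_posSemidef_iff _ one_pos]
  simp only [dotProduct, Pi.neg_apply, ← sq, neg_sq]
  constructor <;> intro h <;> linarith

theorem Mlmi_add_Elmi_negSemidef_iff (β : ℝ) (μ : Fin m → ℝ) (c : ℝ) :
    (Mlmi φ ζ y + Elmi β μ c).NegSemidef ↔
      φ y + 1 / 2 * (β * c + ∑ k, μ k ^ 2 * c ^ 2) + 2 * ∑ k, ζ y k ^ 2 ≤ 0 := by
  rw [NegSemidef, neg_Mlmi_add_Elmi, arrowheadMatrix_posSemidef_iff _ one_half_pos]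
  simp only [dotProduct, Pi.neg_apply, ← sq, neg_sq]
  constructor <;> intro h <;> linarith

end LMI

theorem ContDiffAt.differentiableAt_fderiv {E F : Type*} [NormedAddCommGroup E]
    [NormedSpace ℝ E] [NormedAddCommGroup F] [NormedSpace ℝ F] {g : E → F} {ξ : E}
    {k : WithTop ℕ∞} (hg : ContDiffAt ℝ k g ξ) (hk : 2 ≤ k) : DifferentiableAt ℝ (fderiv ℝ g) ξ :=
  (hg.fderiv_right (m := 1) hk).differentiableAt one_ne_zero

open Set in
theorem norm_sub_sub_smul_deriv_le {E : Type*} [NormedAddCommGroup E] [NormedSpace ℝ E]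
    {f f' f'' : ℝ → E} {a b L : ℝ} (hab : a ≤ b)
    (hf : ∀ t ∈ Icc a b, HasDerivAt f (f' t) t) (hf' : ∀ t ∈ Icc a b, HasDerivAt f' (f'' t) t)
    (hL : ∀ t ∈ Icc a b, ‖f'' t‖ ≤ L) :
    ‖f b - f a - (b - a) • f' a‖ ≤ L * (b - a) ^ 2 / 2 := by
  have hf'_sub : ∀ t ∈ Icc a b, ‖f' t - f' a‖ ≤ L * (t - a) :=
    norm_image_sub_le_of_norm_deriv_right_le_segment
      (fun t ht => (hf' t ht).continuousAt.continuousWithinAt)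
      (fun t ht => (hf' t (Ico_subset_Icc_self ht)).hasDerivWithinAt)
      (fun t ht => hL t (Ico_subset_Icc_self ht))
  have hrem (t : ℝ) (ht : t ∈ Icc a b) :
      HasDerivAt (fun t => f t - f a - (t - a) • f' a) (f' t - f' a) t := by
    simpa using
      ((hf t ht).sub_const (f a)).fun_sub (((hasDerivAt_id t).sub_const a).smul_const (f' a))
  have hbound (t : ℝ) : HasDerivAt (fun t => L * (t - a) ^ 2 / 2) (L * (t - a)) t := by
    refine ((((hasDerivAt_pow 2 (t - a)).comp t ((hasDerivAt_id' t).sub_const a)).const_mul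
      L).div_const 2).congr_deriv ?_
    push_cast
    ring
  refine image_norm_le_of_norm_deriv_right_le_deriv_boundary
    (fun t ht => (hrem t ht).continuousAt.continuousWithinAt)
    (fun t ht => (hrem t (Ico_subset_Icc_self ht)).hasDerivWithinAt) (by simp) hbound
    (fun t ht => hf'_sub t (Ico_subset_Icc_self ht)) (right_mem_Icc.2 hab)

theorem norm_sub_sub_fderiv_le {E F : Type*} [NormedAddCommGroup E] [NormedSpace ℝ E]
    [NormedAddCommGroup F] [NormedSpace ℝ F] {U : Set E} (hU : IsOpen U) {g : E → F}
    (hg : ContDiffOn ℝ 2 g U) {y p : E} (hyp : segment ℝ y p ⊆ U) {L : ℝ}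
    (hL : ∀ ξ ∈ segment ℝ y p, ‖fderiv ℝ (fderiv ℝ g) ξ (p - y) (p - y)‖ ≤ L) :
    ‖g p - g y - fderiv ℝ g y (p - y)‖ ≤ L / 2 := by
  set γ : ℝ → E := fun t => y + t • (p - y)
  have hγ_mem (t : ℝ) (ht : t ∈ Set.Icc 0 1) : γ t ∈ segment ℝ y p := by
    rw [segment_eq_image']
    exact ⟨t, ht, rfl⟩
  have hγ (t : ℝ) : HasDerivAt γ (p - y) t :=
    (((hasDerivAt_id t).smul_const (p - y)).const_add y).congr_deriv (one_smul ℝ _)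
  have hg2 (t : ℝ) (ht : t ∈ Set.Icc 0 1) : ContDiffAt ℝ 2 g (γ t) :=
    hg.contDiffAt (hU.mem_nhds (hyp (hγ_mem t ht)))
  have hd1 (t : ℝ) (ht : t ∈ Set.Icc 0 1) :
      HasDerivAt (fun t => g (γ t)) (fderiv ℝ g (γ t) (p - y)) t :=
    ((hg2 t ht).differentiableAt two_ne_zero).hasFDerivAt.comp_hasDerivAt t (hγ t)
  have hd2 (t : ℝ) (ht : t ∈ Set.Icc 0 1) :
      HasDerivAt (fun t => fderiv ℝ g (γ t) (p - y))
        (fderiv ℝ (fderiv ℝ g) (γ t) (p - y) (p - y)) t := by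
    have hDg := ((hg2 t ht).differentiableAt_fderiv le_rfl).hasFDerivAt.comp_hasDerivAt t (hγ t)
    simpa using hDg.clm_apply (hasDerivAt_const t (p - y))
  simpa [γ] using norm_sub_sub_smul_deriv_le zero_le_one hd1 hd2 fun t ht => hL _ (hγ_mem t ht)

theorem enorm2_sq {n : ℕ} (v : Fin n → ℝ) : enorm2 v ^ 2 = ∑ i, v i ^ 2 :=
  Real.sq_sqrt (Finset.sum_nonneg fun i _ => sq_nonneg (v i))

theorem enorm2_sub {n : ℕ} (a b : Fin n → ℝ) :
    enorm2 (a - b) = dist (WithLp.toLp 2 a) (WithLp.toLp 2 b) := by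
  simp [enorm2, EuclideanSpace.dist_eq, Real.dist_eq, sq_abs]

theorem abs_apply_self_le_of_abs_apply_single_le {n : ℕ}
    (B : (Fin n → ℝ) →L[ℝ] (Fin n → ℝ) →L[ℝ] ℝ) {K : ℝ} (hK0 : 0 ≤ K)
    (hB : ∀ i j : Fin n, |B (Pi.single i 1) (Pi.single j 1)| ≤ K) (v : Fin n → ℝ) :
    |B v v| ≤ K * n * enorm2 v ^ 2 := by
  have hexpand : B v v = ∑ i, ∑ j, v i * (v j * B (Pi.single i 1) (Pi.single j 1)) := by
    rw [← B.toLinearMap₁₂_apply_apply_apply,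
      ← Matrix.toLinearMap₂'_toMatrix' (R := ℝ) B.toLinearMap₁₂, Matrix.toLinearMap₂'_apply]
    simp
  calc |B v v| ≤ ∑ i, ∑ j, |v i| * (|v j| * K) := by
        rw [hexpand]
        refine (Finset.abs_sum_le_sum_abs _ _).trans (Finset.sum_le_sum fun i _ => ?_)
        refine (Finset.abs_sum_le_sum_abs _ _).trans (Finset.sum_le_sum fun j _ => ?_)
        rw [abs_mul, abs_mul]
        gcongr
        exact hB i j
    _ = K * (∑ i, |v i|) ^ 2 := by
        rw [sq, Finset.sum_mul_sum, Finset.mul_sum]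
        refine Finset.sum_congr rfl fun i _ => ?_
        rw [Finset.mul_sum]
        exact Finset.sum_congr rfl fun j _ => by ring
    _ ≤ K * (n * ∑ i, v i ^ 2) := by
        gcongr
        simpa using sq_sum_le_card_mul_sum_sq (s := Finset.univ) (f := fun i => |v i|)
    _ = K * n * enorm2 v ^ 2 := by rw [enorm2_sq, mul_assoc]

theorem pd2_eq_fderiv_fderiv {n : ℕ} {g : (Fin n → ℝ) → ℝ} {ξ : Fin n → ℝ}
    (hg : DifferentiableAt ℝ (fderiv ℝ g) ξ) (q r : Fin n) :
    pd2 g q r ξ = fderiv ℝ (fderiv ℝ g) ξ (Pi.single r 1) (Pi.single q 1) := by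
  rw [pd2, fderiv_clm_apply hg (differentiableAt_const _)]
  simp

theorem abs_sub_sub_fderiv_le_of_abs_pd2_le {n : ℕ} {U s : Set (Fin n → ℝ)} (hU : IsOpen U)
    (hs : Convex ℝ s) (hsU : s ⊆ U) {g : (Fin n → ℝ) → ℝ} (hg : ContDiffOn ℝ 2 g U) {K : ℝ}
    (hK0 : 0 ≤ K) (hK : ∀ q r : Fin n, ∀ ξ ∈ s, |pd2 g q r ξ| ≤ K) {y p : Fin n → ℝ}
    (hy : y ∈ s) (hp : p ∈ s) :
    |g p - g y - fderiv ℝ g y (p - y)| ≤ K * n * enorm2 (p - y) ^ 2 / 2 := by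
  have hseg := hs.segment_subset hy hp
  refine Real.norm_eq_abs _ ▸ norm_sub_sub_fderiv_le hU hg (hseg.trans hsU) fun ξ hξ => ?_
  have hdiff := (hg.contDiffAt (hU.mem_nhds (hsU (hseg hξ)))).differentiableAt_fderiv le_rfl
  refine Real.norm_eq_abs _ ▸ abs_apply_self_le_of_abs_apply_single_le _ hK0 (fun i j => ?_) _
  exact pd2_eq_fderiv_fderiv hdiff j i ▸ hK j i ξ (hseg hξ)

theorem exists_weights_of_mem_convexHull_range {ι E : Type*} [Fintype ι] [AddCommGroup E]
    [Module ℝ E] {x : ι → E} {y : E} (hy : y ∈ convexHull ℝ (Set.range x)) :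
    ∃ w : ι → ℝ, (∀ i, 0 ≤ w i) ∧ ∑ i, w i = 1 ∧ ∑ i, w i • x i = y := by
  classical
  rw [convexHull_range_eq_exists_affineCombination] at hy
  obtain ⟨s, w, hw0, hw1, rfl⟩ := hy
  have hw1' : ∑ i, (s : Set ι).indicator w i = 1 := by
    rwa [Finset.sum_indicator_subset _ s.subset_univ]
  refine ⟨(s : Set ι).indicator w, fun i => Set.indicator_nonneg hw0 i, hw1', ?_⟩
  rw [Finset.affineCombination_indicator_subset _ _ s.subset_univ,
    Finset.univ.affineCombination_eq_linear_combination _ _ hw1']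

theorem exists_enorm2_sub_le_of_mem_convexHull {ι : Type*} {n : ℕ} {x : ι → Fin n → ℝ}
    {y : Fin n → ℝ} (hy : y ∈ convexHull ℝ (Set.range x)) (p : Fin n → ℝ) :
    ∃ i, enorm2 (p - y) ≤ enorm2 (p - x i) := by
  let e := (WithLp.linearEquiv 2 ℝ (Fin n → ℝ)).symm.toLinearMap
  have hy' : WithLp.toLp 2 y ∈ convexHull ℝ (Set.range fun i => WithLp.toLp 2 (x i)) := by
    have := Set.mem_image_of_mem e hy
    rwa [e.image_convexHull, ← Set.range_comp] at this
  obtain ⟨_, ⟨i, rfl⟩, hi⟩ := convexHull_exists_dist_ge hy' (WithLp.toLp 2 p)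
  refine ⟨i, ?_⟩
  rwa [enorm2_sub, enorm2_sub, dist_comm, dist_comm (WithLp.toLp 2 p)]

section WeightedAverage

variable {ι : Type*} [Fintype ι] {w : ι → ℝ}

theorem abs_sub_wavg_le_of_abs_sub_sub_le {E : Type*} [AddCommGroup E] [Module ℝ E]
    (hw0 : ∀ j, 0 ≤ w j) (hw1 : ∑ j, w j = 1) {g : E → ℝ} (L : E →ₗ[ℝ] ℝ) {x : ι → E}
    {ε : ι → ℝ} (h : ∀ j, |g (x j) - g (∑ i, w i • x i) - L (x j - ∑ i, w i • x i)| ≤ ε j) :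
    |g (∑ i, w i • x i) - ∑ j, w j * g (x j)| ≤ ∑ j, w j * ε j := by
  set y := ∑ i, w i • x i
  -- the first-order terms average out since `y` is the barycentre of the `x j`
  have hlin : ∑ j, w j * L (x j - y) = 0 := by
    simp only [← smul_eq_mul, ← map_smul, ← map_sum, smul_sub, Finset.sum_sub_distrib,
      ← Finset.sum_smul, hw1, one_smul, sub_self, map_zero, y]
  have hrem : g y - ∑ j, w j * g (x j) = -∑ j, w j * (g (x j) - g y - L (x j - y)) := by
    simp only [mul_sub, Finset.sum_sub_distrib, hlin, ← Finset.sum_mul, hw1]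
    ring
  rw [hrem, abs_neg]
  refine (Finset.abs_sum_le_sum_abs _ _).trans (Finset.sum_le_sum fun j _ => ?_)
  rw [abs_mul, abs_of_nonneg (hw0 j)]
  exact mul_le_mul_of_nonneg_left (h j) (hw0 j)

theorem sq_wavg_le (hw0 : ∀ j, 0 ≤ w j) (hw1 : ∑ j, w j = 1) (a : ι → ℝ) :
    (∑ j, w j * a j) ^ 2 ≤ ∑ j, w j * a j ^ 2 := by
  simpa using (even_two.convexOn_pow (𝕜 := ℝ)).map_sum_le (t := Finset.univ) (fun j _ => hw0 j)
    hw1 (fun j _ => Set.mem_univ (a j))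

theorem sq_le_wavg_of_abs_sub_wavg_le (hw0 : ∀ j, 0 ≤ w j) (hw1 : ∑ j, w j = 1)
    {a b : ι → ℝ} {z : ℝ} (hz : |z - ∑ j, w j * a j| ≤ ∑ j, w j * b j) :
    z ^ 2 ≤ ∑ j, w j * (2 * a j ^ 2 + 2 * b j ^ 2) := by
  set A := ∑ j, w j * a j
  have hdev : (z - A) ^ 2 ≤ (∑ j, w j * b j) ^ 2 := sq_le_sq' (abs_le.1 hz).1 (abs_le.1 hz).2
  calc z ^ 2 ≤ 2 * A ^ 2 + 2 * (z - A) ^ 2 := by nlinarith [sq_nonneg (z - 2 * A)]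
    _ ≤ 2 * ∑ j, w j * a j ^ 2 + 2 * ∑ j, w j * b j ^ 2 := by
        gcongr
        · exact sq_wavg_le hw0 hw1 a
        · exact hdev.trans (sq_wavg_le hw0 hw1 b)
    _ = ∑ j, w j * (2 * a j ^ 2 + 2 * b j ^ 2) := by
        simp only [mul_add, Finset.sum_add_distrib, Finset.mul_sum]
        congr 1 <;> exact Finset.sum_congr rfl fun j _ => by ring

end WeightedAverage

theorem abs_sub_wavg_le_of_abs_pd2_le {ι : Type*} [Fintype ι] {n : ℕ} {x : ι → Fin n → ℝ}
    {U : Set (Fin n → ℝ)} (hU : IsOpen U) (hσU : convexHull ℝ (Set.range x) ⊆ U)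
    {g : (Fin n → ℝ) → ℝ} (hg : ContDiffOn ℝ 2 g U) {K : ℝ} (hK0 : 0 ≤ K)
    (hK : ∀ q r : Fin n, ∀ ξ ∈ convexHull ℝ (Set.range x), |pd2 g q r ξ| ≤ K) {c : ι → ℝ}
    (hc : ∀ j, n * (⨆ υ, enorm2 (x j - x υ) ^ 2) ≤ c j) {w : ι → ℝ} (hw0 : ∀ j, 0 ≤ w j)
    (hw1 : ∑ j, w j = 1) :
    |g (∑ j, w j • x j) - ∑ j, w j * g (x j)| ≤ ∑ j, w j * (K * c j / 2) := by
  have hx j : x j ∈ convexHull ℝ (Set.range x) := subset_convexHull ℝ _ ⟨j, rfl⟩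
  have hy : ∑ j, w j • x j ∈ convexHull ℝ (Set.range x) :=
    (convex_convexHull ℝ _).sum_mem (fun j _ => hw0 j) hw1 fun j _ => hx j
  refine abs_sub_wavg_le_of_abs_sub_sub_le hw0 hw1 (fderiv ℝ g (∑ j, w j • x j)).toLinearMap
    fun j => ?_
  obtain ⟨υ, hυ⟩ := exists_enorm2_sub_le_of_mem_convexHull hy (x j)
  have hdist : n * enorm2 (x j - ∑ i, w i • x i) ^ 2 ≤ c j := by
    refine le_trans ?_ (hc j)
    gcongr
    exact le_ciSup_of_le (Set.finite_range _).bddAbove υ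
      (pow_le_pow_left₀ (Real.sqrt_nonneg _) hυ 2)
  calc _ ≤ K * n * enorm2 (x j - ∑ i, w i • x i) ^ 2 / 2 :=
        abs_sub_sub_fderiv_le_of_abs_pd2_le hU (convex_convexHull ℝ _) hσU hg hK0 hK hy (hx j)
    _ ≤ K * c j / 2 := by
        rw [mul_assoc]
        gcongr

theorem lmi_vertex_constraints_imply_lmi_on_simplex_general
    {n m : ℕ} (hn : 0 < n)
    (x : Fin (n + 1) → (Fin n → ℝ))
    (U : Set (Fin n → ℝ)) (hU : IsOpen U)
    (hσU : convexHull ℝ (Set.range x) ⊆ U)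
    (φ : (Fin n → ℝ) → ℝ) (hφ : ContDiffOn ℝ 2 φ U)
    (ζ : (Fin n → ℝ) → (Fin m → ℝ)) (hζ : ContDiffOn ℝ 2 ζ U)
    (β : ℝ)
    (hβ : ∀ (q r : Fin n), ∀ ξ ∈ convexHull ℝ (Set.range x), |pd2 φ q r ξ| ≤ β)
    (μ : Fin m → ℝ)
    (hμ : ∀ (k : Fin m) (q r : Fin n), ∀ ξ ∈ convexHull ℝ (Set.range x),
      |pd2 (fun z => ζ z k) q r ξ| ≤ μ k)
    (c : Fin (n + 1) → ℝ)
    (hc : ∀ j, c j = n * (⨆ υ : Fin (n + 1), enorm2 (x j - x υ) ^ 2))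
    (hvertex : ∀ j : Fin (n + 1), (Mlmi φ ζ (x j) + Elmi β μ (c j)).NegSemidef) :
    ∀ y ∈ convexHull ℝ (Set.range x), (Mlmi φ ζ y).NegSemidef := by
  intro y hy
  obtain ⟨w, hw0, hw1, rfl⟩ := exists_weights_of_mem_convexHull_range hy
  have hx0 : x 0 ∈ convexHull ℝ (Set.range x) := subset_convexHull ℝ _ ⟨0, rfl⟩
  have hcle j := (hc j).ge
  have hφy := abs_sub_wavg_le_of_abs_pd2_le hU hσU hφ
    ((abs_nonneg _).trans (hβ ⟨0, hn⟩ ⟨0, hn⟩ _ hx0)) hβ hcle hw0 hw1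
  have hζy k := sq_le_wavg_of_abs_sub_wavg_le hw0 hw1 <| abs_sub_wavg_le_of_abs_pd2_le hU hσU
    (contDiffOn_pi.1 hζ k) ((abs_nonneg _).trans (hμ k ⟨0, hn⟩ ⟨0, hn⟩ _ hx0)) (hμ k) hcle hw0 hw1
  rw [Mlmi_negSemidef_iff]
  calc _ ≤ ∑ j, w j * φ (x j) + ∑ j, w j * (β * c j / 2)
        + ∑ k, ∑ j, w j * (2 * ζ (x j) k ^ 2 + 2 * (μ k * c j / 2) ^ 2) :=
        add_le_add (by linarith [(abs_le.1 hφy).2]) (Finset.sum_le_sum fun k _ => hζy k)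
    _ = ∑ j, w j * (φ (x j) + 1 / 2 * (β * c j + ∑ k, μ k ^ 2 * c j ^ 2)
          + 2 * ∑ k, ζ (x j) k ^ 2) := by
        rw [Finset.sum_comm]
        simp only [← Finset.sum_add_distrib, ← Finset.mul_sum]
        refine Finset.sum_congr rfl fun j _ => ?_
        have hsplit k : 2 * ζ (x j) k ^ 2 + 2 * (μ k * c j / 2) ^ 2
            = 2 * ζ (x j) k ^ 2 + 1 / 2 * (μ k ^ 2 * c j ^ 2) := by ring
        simp only [hsplit, Finset.sum_add_distrib, ← Finset.mul_sum]
        ring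
    _ ≤ 0 := Finset.sum_nonpos fun j _ => mul_nonpos_of_nonneg_of_nonpos (hw0 j)
        ((Mlmi_add_Elmi_negSemidef_iff _ _ _ _ _ _).1 (hvertex j))

/-- (Theorem 1 of the paper, second part.) With the setup of the LMI
error bound on a simplex, if `M(x_j) + E(x_j) ⪯ 0` at every vertex `x_j` of the simplex
`σ = co{x₀,…,xₙ}`, then `M(x) ⪯ 0` for every `x ∈ σ`. -/
theorem lmi_vertex_constraints_imply_lmi_on_simplex
    {n m : ℕ} (hn : 0 < n)
    (x : Fin (n + 1) → (Fin n → ℝ)) (hx : AffineIndependent ℝ x)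
    (U : Set (Fin n → ℝ)) (hU : IsOpen U)
    (hσU : convexHull ℝ (Set.range x) ⊆ U)
    (φ : (Fin n → ℝ) → ℝ) (hφ : ContDiffOn ℝ 2 φ U)
    (ζ : (Fin n → ℝ) → (Fin m → ℝ)) (hζ : ContDiffOn ℝ 2 ζ U)
    (β : ℝ)
    (hβ : ∀ (q r : Fin n), ∀ ξ ∈ convexHull ℝ (Set.range x), |pd2 φ q r ξ| ≤ β)
    (μ : Fin m → ℝ)
    (hμ : ∀ (k : Fin m) (q r : Fin n), ∀ ξ ∈ convexHull ℝ (Set.range x),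
      |pd2 (fun z => ζ z k) q r ξ| ≤ μ k)
    (c : Fin (n + 1) → ℝ)
    (hc : ∀ j, c j = n * (⨆ υ : Fin (n + 1), enorm2 (x j - x υ) ^ 2))
    (hvertex : ∀ j : Fin (n + 1), (Mlmi φ ζ (x j) + Elmi β μ (c j)).NegSemidef) :
    ∀ y ∈ convexHull ℝ (Set.range x), (Mlmi φ ζ y).NegSemidef :=
  lmi_vertex_constraints_imply_lmi_on_simplex_general hn x U hU hσU φ hφ ζ hζ β hβ μ hμ c hc hvertex
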